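/- arXiv:math/0611705 — 3 statements merged into one kernel-verified Lean document; each statement's English description precedes it below -/
import Mathlib

section
/- Let d ≥ 2, σ ∈ (-1,1), and let x, ξ ∈ ℝ^d \ {0} satisfy x·ξ > σ|x||ξ|. Then for every t ≥ 0, one has (x+tξ)·ξ > σ|x+tξ||ξ| and |x+tξ| ≥ c(|x| + |tξ|), where c = ((1+σ)/2)^{1/2}. -/
open scoped RealInnerProductSpace

private lemma stmt_0_aux (σ X e n s t : ℝ) (hσ1 : -1 < σ) (hσ2 : σ < 1)
    (hX : 0 < X) (he : 0 < e) (hn : 0 < n) (ht : 0 ≤ t)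
    (hcone : s > σ * (X * e)) (hnsq : n ^ 2 = X ^ 2 + 2 * t * s + t ^ 2 * e ^ 2)
    (htri : n ≤ X + t * e) :
    s + t * e ^ 2 > σ * (n * e) := by
  have hte2 : 0 ≤ t * e ^ 2 := by positivity
  rcases le_or_gt 0 (s + t * e ^ 2) with hI | hI
  · rcases lt_trichotomy σ 0 with hσ0 | hσ0 | hσ0
    · have : σ * (n * e) < 0 := mul_neg_of_neg_of_pos hσ0 (mul_pos hn he)
      linarith
    · subst hσ0
      nlinarith [mul_pos hX he]
    · nlinarith [mul_le_mul_of_nonneg_right htri (mul_nonneg hσ0.le he.le),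
        mul_nonneg hte2 (by linarith : (0:ℝ) ≤ 1 - σ)]
  · have hs0 : s < 0 := by linarith
    have hσneg : σ < 0 := by nlinarith [mul_pos hX he]
    have hKs : s ^ 2 < σ ^ 2 * (X * e) ^ 2 := by
      nlinarith [mul_pos (sub_pos.mpr hcone)
        (show 0 < -s - σ * (X * e) by nlinarith [mul_pos hX he])]
    have hNsq : (n * e) ^ 2 = (s + t * e ^ 2) ^ 2 + ((X * e) ^ 2 - s ^ 2) := by
      nlinarith [hnsq]
    have key : (s + t * e ^ 2) ^ 2 < σ ^ 2 * (n * e) ^ 2 := by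
      nlinarith [hNsq, hKs,
        mul_nonneg (by nlinarith : (0:ℝ) ≤ 1 - σ ^ 2)
          (mul_nonneg (by linarith : (0:ℝ) ≤ (s + t * e ^ 2) - s)
            (by linarith : (0:ℝ) ≤ -s - (s + t * e ^ 2)))]
    have hσNe : σ * (n * e) < 0 := mul_neg_of_neg_of_pos hσneg (mul_pos hn he)
    nlinarith [key, hσNe, hI]

theorem stmt_0 (d : ℕ) (hd : 2 ≤ d) (σ : ℝ) (hσ : σ ∈ Set.Ioo (-1 : ℝ) 1)
    (x ξ : EuclideanSpace ℝ (Fin d)) (hx : x ≠ 0) (hξ : ξ ≠ 0)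
    (hcone : ⟪x, ξ⟫ > σ * (‖x‖ * ‖ξ‖)) (t : ℝ) (ht : 0 ≤ t) :
    ⟪x + t • ξ, ξ⟫ > σ * (‖x + t • ξ‖ * ‖ξ‖) ∧
      ‖x + t • ξ‖ ≥ Real.sqrt ((1 + σ) / 2) * (‖x‖ + ‖t • ξ‖) := by
  obtain ⟨hσ1, hσ2⟩ := hσ
  have hxn : 0 < ‖x‖ := norm_pos_iff.mpr hx
  have hξn : 0 < ‖ξ‖ := norm_pos_iff.mpr hξ
  have htξ : ‖t • ξ‖ = t * ‖ξ‖ := by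
    rw [norm_smul, Real.norm_eq_abs, abs_of_nonneg ht]
  have hysq : ‖x + t • ξ‖ ^ 2 = ‖x‖ ^ 2 + 2 * t * ⟪x, ξ⟫ + t ^ 2 * ‖ξ‖ ^ 2 := by
    rw [norm_add_sq_real, real_inner_smul_right, htξ]
    ring
  have hin : ⟪x + t • ξ, ξ⟫ = ⟪x, ξ⟫ + t * ‖ξ‖ ^ 2 := by
    rw [inner_add_left, real_inner_smul_left, real_inner_self_eq_norm_sq]
  have h2 : ‖x + t • ξ‖ ≥ Real.sqrt ((1 + σ) / 2) * (‖x‖ + ‖t • ξ‖) := by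
    have hm : 0 ≤ ‖x‖ + ‖t • ξ‖ := by positivity
    have hr : (0:ℝ) ≤ (1 + σ) / 2 := by linarith
    have key : (1 + σ) / 2 * (‖x‖ + ‖t • ξ‖) ^ 2 ≤ ‖x + t • ξ‖ ^ 2 := by
      rw [hysq, htξ]
      nlinarith [mul_nonneg ht (sub_nonneg.mpr hcone.le),
        mul_nonneg (by linarith : (0:ℝ) ≤ 1 - σ) (sq_nonneg (‖x‖ - t * ‖ξ‖))]
    calc Real.sqrt ((1 + σ) / 2) * (‖x‖ + ‖t • ξ‖)
        = Real.sqrt ((1 + σ) / 2 * (‖x‖ + ‖t • ξ‖) ^ 2) := by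
          rw [Real.sqrt_mul hr, Real.sqrt_sq hm]
      _ ≤ Real.sqrt (‖x + t • ξ‖ ^ 2) := Real.sqrt_le_sqrt key
      _ = ‖x + t • ξ‖ := Real.sqrt_sq (norm_nonneg _)
  refine ⟨?_, h2⟩
  have hNpos : 0 < ‖x + t • ξ‖ := by
    have hrpos : 0 < Real.sqrt ((1 + σ) / 2) := Real.sqrt_pos.mpr (by linarith)
    have : 0 < Real.sqrt ((1 + σ) / 2) * (‖x‖ + ‖t • ξ‖) := by positivity
    linarith
  have htri : ‖x + t • ξ‖ ≤ ‖x‖ + t * ‖ξ‖ := by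
    calc ‖x + t • ξ‖ ≤ ‖x‖ + ‖t • ξ‖ := norm_add_le _ _
      _ = ‖x‖ + t * ‖ξ‖ := by rw [htξ]
  rw [hin]
  exact stmt_0_aux σ ‖x‖ ‖ξ‖ ‖x + t • ξ‖ ⟪x, ξ⟫ t hσ1 hσ2 hxn hξn hNpos ht
    hcone hysq htri
end

section
/- Let d ≥ 2 and σ₊, σ₋ ∈ (-1,1) with σ₋ + σ₊ > 0. Then there exists c > 0 such that for all x, y, ξ ∈ ℝ^d \ {0}: if x·ξ > σ₊|x||ξ| and −y·ξ > σ₋|y||ξ|, then |x − y| ≥ c(|x| + |y|). -/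
open scoped RealInnerProductSpace

theorem stmt_2 (d : ℕ) (hd : 2 ≤ d) (σp σm : ℝ)
    (hσp : σp ∈ Set.Ioo (-1 : ℝ) 1) (hσm : σm ∈ Set.Ioo (-1 : ℝ) 1)
    (hsum : 0 < σm + σp) :
    ∃ c > 0, ∀ x y ξ : EuclideanSpace ℝ (Fin d), x ≠ 0 → y ≠ 0 → ξ ≠ 0 →
      ⟪x, ξ⟫ > σp * (‖x‖ * ‖ξ‖) → -⟪y, ξ⟫ > σm * (‖y‖ * ‖ξ‖) →
      ‖x - y‖ ≥ c * (‖x‖ + ‖y‖) := by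
  obtain ⟨hp1, hp2⟩ := hσp
  obtain ⟨hm1, hm2⟩ := hσm
  refine ⟨(σm + σp) / 4, by linarith, fun x y ξ hx hy hξ hxξ hyξ => ?_⟩
  have hξ0 : (0 : ℝ) < ‖ξ‖ := norm_pos_iff.mpr hξ
  -- key inequality from Cauchy-Schwarz
  have hcs : ⟪x - y, ξ⟫ ≤ ‖x - y‖ * ‖ξ‖ := real_inner_le_norm _ _
  have hsub : ⟪x - y, ξ⟫ = ⟪x, ξ⟫ - ⟪y, ξ⟫ := inner_sub_left x y ξ
  have hA : σp * ‖x‖ + σm * ‖y‖ ≤ ‖x - y‖ := by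
    have h1 : (σp * ‖x‖ + σm * ‖y‖) * ‖ξ‖ < ‖x - y‖ * ‖ξ‖ := by
      calc (σp * ‖x‖ + σm * ‖y‖) * ‖ξ‖
          = σp * (‖x‖ * ‖ξ‖) + σm * (‖y‖ * ‖ξ‖) := by ring
        _ < ⟪x, ξ⟫ + -⟪y, ξ⟫ := by linarith
        _ = ⟪x - y, ξ⟫ := by rw [hsub]; ring
        _ ≤ ‖x - y‖ * ‖ξ‖ := hcs
    nlinarith [mul_pos hξ0 hξ0]
  have hB1 : ‖x‖ - ‖y‖ ≤ ‖x - y‖ := by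
    have := norm_sub_norm_le x y
    linarith [le_abs_self (‖x‖ - ‖y‖)]
  have hB2 : ‖y‖ - ‖x‖ ≤ ‖x - y‖ := by
    have := norm_sub_norm_le y x
    rw [norm_sub_rev] at this
    linarith [le_abs_self (‖y‖ - ‖x‖)]
  have hn : (0:ℝ) ≤ ‖x - y‖ := norm_nonneg _
  rcases le_total σm σp with h | h
  · -- use (1/2) hA + ((σp - σm)/4) hB2 ; total coeff ≤ 1
    nlinarith [mul_le_mul_of_nonneg_left hB2 (by linarith : (0:ℝ) ≤ (σp - σm)/4)]
  · nlinarith [mul_le_mul_of_nonneg_left hB1 (by linarith : (0:ℝ) ≤ (σm - σp)/4)]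
end

section
/- Let d ≥ 1, let σ₃ > σ₂ in (-1,1), and let x, y, ξ ∈ ℝ^d with x, y, ξ ≠ 0 satisfy x·ξ ≤ σ₂|x||ξ| and y·ξ > σ₃|y||ξ|. Then there exists c = c(σ₂,σ₃) > 0 with |x − y| ≥ c(|x| + |y|), and for all τ ≥ 0, |x − 2τξ − y| ≥ c'(|x| + |y| + τ|ξ|) for some c' = c'(σ₂, σ₃) > 0. -/
open scoped RealInnerProductSpace

open Real

private lemma aux_cos (σ₂ σ₃ : ℝ) (h2 : σ₂ ∈ Set.Ioo (-1:ℝ) 1) (h3 : σ₃ ∈ Set.Ioo (-1:ℝ) 1)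
    (h23 : σ₂ ≤ σ₃) (s t : ℝ) (hs1 : -1 ≤ s) (hs2 : s ≤ σ₂) (ht1 : σ₃ ≤ t) (ht2 : t ≤ 1) :
    s*t + Real.sqrt (1-s^2) * Real.sqrt (1-t^2)
      ≤ σ₂*σ₃ + Real.sqrt (1-σ₂^2) * Real.sqrt (1-σ₃^2) := by
  have hs2' : s ≤ 1 := le_trans hs2 h2.2.le
  have ht1' : -1 ≤ t := le_trans h3.1.le ht1
  have e1 : s*t + Real.sqrt (1-s^2) * Real.sqrt (1-t^2)
      = Real.cos (Real.arccos s - Real.arccos t) := by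
    rw [Real.cos_sub, Real.cos_arccos hs1 hs2', Real.cos_arccos ht1' ht2,
        Real.sin_arccos, Real.sin_arccos]
  have e2 : σ₂*σ₃ + Real.sqrt (1-σ₂^2) * Real.sqrt (1-σ₃^2)
      = Real.cos (Real.arccos σ₂ - Real.arccos σ₃) := by
    rw [Real.cos_sub, Real.cos_arccos h2.1.le h2.2.le, Real.cos_arccos h3.1.le h3.2.le,
        Real.sin_arccos, Real.sin_arccos]
  rw [e1, e2]
  have hA : Real.arccos σ₂ ≤ Real.arccos s :=
    (Real.strictAntiOn_arccos.le_iff_ge ⟨h2.1.le, h2.2.le⟩ ⟨hs1, hs2'⟩).2 hs2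
  have hB : Real.arccos t ≤ Real.arccos σ₃ :=
    (Real.strictAntiOn_arccos.le_iff_ge ⟨ht1', ht2⟩ ⟨h3.1.le, h3.2.le⟩).2 ht1
  have h0 : (0:ℝ) ≤ Real.arccos σ₂ - Real.arccos σ₃ := by
    have := (Real.strictAntiOn_arccos.le_iff_ge ⟨h3.1.le, h3.2.le⟩ ⟨h2.1.le, h2.2.le⟩).2 h23
    linarith
  have hπ : Real.arccos s - Real.arccos t ≤ π :=
    by linarith [Real.arccos_le_pi s, Real.arccos_nonneg t]
  exact Real.cos_le_cos_of_nonneg_of_le_pi h0 hπ (by linarith)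


private lemma le_of_sq_le_sq' {A B : ℝ} (hB : 0 ≤ B) (h : A^2 ≤ B^2) (hA : 0 ≤ A) : A ≤ B := by
  nlinarith

private lemma key_inner {d : ℕ} (σ₂ σ₃ : ℝ) (h2 : σ₂ ∈ Set.Ioo (-1:ℝ) 1)
    (h3 : σ₃ ∈ Set.Ioo (-1:ℝ) 1) (h23 : σ₂ ≤ σ₃) (x y ξ : EuclideanSpace ℝ (Fin d))
    (hξ : ξ ≠ 0)
    (hx : ⟪x, ξ⟫ ≤ σ₂ * (‖x‖ * ‖ξ‖)) (hy : ⟪y, ξ⟫ > σ₃ * (‖y‖ * ‖ξ‖)) :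
    ⟪x, y⟫ ≤ (σ₂*σ₃ + Real.sqrt (1-σ₂^2) * Real.sqrt (1-σ₃^2)) * (‖x‖ * ‖y‖) := by
  have hξ' : (0:ℝ) < ‖ξ‖ := norm_pos_iff.2 hξ
  have hy0 : y ≠ 0 := by
    rintro rfl
    simp at hy
  have hy' : (0:ℝ) < ‖y‖ := norm_pos_iff.2 hy0
  by_cases hx0 : x = 0
  · subst hx0
    simp
  have hx' : (0:ℝ) < ‖x‖ := norm_pos_iff.2 hx0
  set e : EuclideanSpace ℝ (Fin d) := ‖ξ‖⁻¹ • ξ with he_def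
  have he : ‖e‖ = 1 := by
    rw [he_def, norm_smul, norm_inv, norm_norm, inv_mul_cancel₀ hξ'.ne']
  set a : ℝ := ⟪x, e⟫ with ha_def
  set b : ℝ := ⟪y, e⟫ with hb_def
  have hae : a = ‖ξ‖⁻¹ * ⟪x, ξ⟫ := by rw [ha_def, he_def, real_inner_smul_right]
  have hbe : b = ‖ξ‖⁻¹ * ⟪y, ξ⟫ := by rw [hb_def, he_def, real_inner_smul_right]
  have ha : a ≤ σ₂ * ‖x‖ := by
    rw [hae]
    have h := mul_le_mul_of_nonneg_left hx (inv_nonneg.2 hξ'.le)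
    calc ‖ξ‖⁻¹ * ⟪x, ξ⟫ ≤ ‖ξ‖⁻¹ * (σ₂ * (‖x‖ * ‖ξ‖)) := h
      _ = σ₂ * ‖x‖ := by field_simp
  have hb : σ₃ * ‖y‖ < b := by
    rw [hbe]
    have h := mul_lt_mul_of_pos_left hy (inv_pos.2 hξ')
    calc σ₃ * ‖y‖ = ‖ξ‖⁻¹ * (σ₃ * (‖y‖ * ‖ξ‖)) := by field_simp
      _ < ‖ξ‖⁻¹ * ⟪y, ξ⟫ := h
  have haabs : |a| ≤ ‖x‖ := by
    have := abs_real_inner_le_norm x e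
    rwa [he, mul_one] at this
  have hbabs : |b| ≤ ‖y‖ := by
    have := abs_real_inner_le_norm y e
    rwa [he, mul_one] at this
  have hee : ⟪e, e⟫ = (1:ℝ) := by rw [real_inner_self_eq_norm_sq, he]; norm_num
  have hdec : ⟪x - a • e, y - b • e⟫ = ⟪x, y⟫ - a * b := by
    simp only [inner_sub_left, inner_sub_right, real_inner_smul_left, real_inner_smul_right,
      hee, mul_one]
    have hey : ⟪e, y⟫ = b := by rw [hb_def, real_inner_comm]
    rw [hey, ← ha_def]
    ring
  have hxn : ‖x - a • e‖ ^ 2 = ‖x‖ ^ 2 - a ^ 2 := by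
    rw [norm_sub_sq_real, real_inner_smul_right, norm_smul, he, mul_one, Real.norm_eq_abs,
        sq_abs, ← ha_def]
    ring
  have hyn : ‖y - b • e‖ ^ 2 = ‖y‖ ^ 2 - b ^ 2 := by
    rw [norm_sub_sq_real, real_inner_smul_right, norm_smul, he, mul_one, Real.norm_eq_abs,
        sq_abs, ← hb_def]
    ring
  set s : ℝ := a / ‖x‖ with hs_def
  set t : ℝ := b / ‖y‖ with ht_def
  have has : a = s * ‖x‖ := by rw [hs_def]; field_simp
  have hbt : b = t * ‖y‖ := by rw [ht_def]; field_simp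
  have hs1 : -1 ≤ s := by
    rw [hs_def, le_div_iff₀ hx']
    have := (abs_le.1 haabs).1
    linarith
  have hs2 : s ≤ σ₂ := by rw [hs_def, div_le_iff₀ hx']; linarith
  have ht1 : σ₃ ≤ t := by rw [ht_def, le_div_iff₀ hy']; linarith
  have ht2 : t ≤ 1 := by
    rw [ht_def, div_le_iff₀ hy']
    have := (abs_le.1 hbabs).2
    linarith
  have hxnorm : ‖x - a • e‖ = ‖x‖ * Real.sqrt (1 - s ^ 2) := by
    have h1 : ‖x‖ ^ 2 - a ^ 2 = ‖x‖ ^ 2 * (1 - s ^ 2) := by rw [has]; ring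
    rw [← Real.sqrt_sq (norm_nonneg (x - a • e)), hxn, h1,
        Real.sqrt_mul (sq_nonneg _), Real.sqrt_sq hx'.le]
  have hynorm : ‖y - b • e‖ = ‖y‖ * Real.sqrt (1 - t ^ 2) := by
    have h1 : ‖y‖ ^ 2 - b ^ 2 = ‖y‖ ^ 2 * (1 - t ^ 2) := by rw [hbt]; ring
    rw [← Real.sqrt_sq (norm_nonneg (y - b • e)), hyn, h1,
        Real.sqrt_mul (sq_nonneg _), Real.sqrt_sq hy'.le]
  have hCS : ⟪x - a • e, y - b • e⟫ ≤ ‖x - a • e‖ * ‖y - b • e‖ := real_inner_le_norm _ _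
  rw [hxnorm, hynorm] at hCS
  have hkey := aux_cos σ₂ σ₃ h2 h3 h23 s t hs1 hs2 ht1 ht2
  have hmul := mul_le_mul_of_nonneg_right hkey (le_of_lt (mul_pos hx' hy'))
  calc ⟪x, y⟫ = a * b + ⟪x - a • e, y - b • e⟫ := by rw [hdec]; ring
    _ ≤ a * b + ‖x‖ * Real.sqrt (1 - s ^ 2) * (‖y‖ * Real.sqrt (1 - t ^ 2)) := by linarith
    _ = (s * t + Real.sqrt (1 - s ^ 2) * Real.sqrt (1 - t ^ 2)) * (‖x‖ * ‖y‖) := by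
        rw [has, hbt]; ring
    _ ≤ (σ₂*σ₃ + Real.sqrt (1-σ₂^2) * Real.sqrt (1-σ₃^2)) * (‖x‖ * ‖y‖) := hmul

set_option maxHeartbeats 2000000 in
theorem stmt_15 (d : ℕ) (hd : 1 ≤ d) (σ₂ σ₃ : ℝ)
    (hσ₂ : σ₂ ∈ Set.Ioo (-1 : ℝ) 1) (hσ₃ : σ₃ ∈ Set.Ioo (-1 : ℝ) 1) (hlt : σ₂ < σ₃) :
    ∃ c > 0, ∃ c' > 0, ∀ x y ξ : EuclideanSpace ℝ (Fin d), x ≠ 0 → y ≠ 0 → ξ ≠ 0 →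
      ⟪x, ξ⟫ ≤ σ₂ * (‖x‖ * ‖ξ‖) → ⟪y, ξ⟫ > σ₃ * (‖y‖ * ‖ξ‖) →
      ‖x - y‖ ≥ c * (‖x‖ + ‖y‖) ∧
        ∀ τ : ℝ, 0 ≤ τ → ‖x - (2 * τ) • ξ - y‖ ≥ c' * (‖x‖ + ‖y‖ + τ * ‖ξ‖) := by
  set ρ : ℝ := σ₂*σ₃ + Real.sqrt (1-σ₂^2) * Real.sqrt (1-σ₃^2) with hρ_def
  have hρ1 : ρ < 1 := by
    have e2 : ρ = Real.cos (Real.arccos σ₂ - Real.arccos σ₃) := by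
      rw [hρ_def, Real.cos_sub, Real.cos_arccos hσ₂.1.le hσ₂.2.le,
          Real.cos_arccos hσ₃.1.le hσ₃.2.le, Real.sin_arccos, Real.sin_arccos]
    have hθpos : 0 < Real.arccos σ₂ - Real.arccos σ₃ := by
      have := Real.strictAntiOn_arccos ⟨hσ₂.1.le, hσ₂.2.le⟩ ⟨hσ₃.1.le, hσ₃.2.le⟩ hlt
      linarith
    have hθpi : Real.arccos σ₂ - Real.arccos σ₃ ≤ Real.pi := by
      linarith [Real.arccos_le_pi σ₂, Real.arccos_nonneg σ₃]
    have := Real.strictAntiOn_cos ⟨le_refl 0, Real.pi_pos.le⟩ ⟨hθpos.le, hθpi⟩ hθpos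
    rw [Real.cos_zero] at this
    linarith [e2 ▸ this]
  set ρ' : ℝ := max ρ 0 with hρ'_def
  have hρ'0 : 0 ≤ ρ' := le_max_right _ _
  have hρ'1 : ρ' < 1 := max_lt hρ1 one_pos
  set c : ℝ := Real.sqrt ((1 - ρ') / 2) with hc_def
  have hc2 : c ^ 2 = (1 - ρ') / 2 := Real.sq_sqrt (by linarith)
  have hcpos : 0 < c := Real.sqrt_pos.2 (by linarith)
  have hc1 : c ≤ 1 := by
    nlinarith
  set m : ℝ := |σ₃| with hm_def
  have hm0 : 0 ≤ m := abs_nonneg _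
  have hm1 : m < 1 := abs_lt.2 ⟨hσ₃.1, hσ₃.2⟩
  have hmσ : σ₃ ≤ m ∧ -m ≤ σ₃ := ⟨le_abs_self _, neg_abs_le _⟩
  set κ : ℝ := Real.sqrt ((1 - m) / 2) with hκ_def
  have hκ2 : κ ^ 2 = (1 - m) / 2 := Real.sq_sqrt (by linarith)
  have hκpos : 0 < κ := Real.sqrt_pos.2 (by linarith)
  have hκ1 : κ ≤ 1 := by nlinarith
  -- the generic separation estimate
  have Hsep : ∀ x y ξ : EuclideanSpace ℝ (Fin d), ξ ≠ 0 →
      ⟪x, ξ⟫ ≤ σ₂ * (‖x‖ * ‖ξ‖) → ⟪y, ξ⟫ > σ₃ * (‖y‖ * ‖ξ‖) →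
      ‖x - y‖ ≥ c * (‖x‖ + ‖y‖) := by
    intro x y ξ hξ hx hy
    have hk := key_inner σ₂ σ₃ hσ₂ hσ₃ hlt.le x y ξ hξ hx hy
    have hk' : ⟪x, y⟫ ≤ ρ' * (‖x‖ * ‖y‖) := by
      have := mul_le_mul_of_nonneg_right (le_max_left ρ 0)
        (mul_nonneg (norm_nonneg x) (norm_nonneg y))
      exact hk.trans this
    have hexp : ‖x - y‖ ^ 2 = ‖x‖ ^ 2 - 2 * ⟪x, y⟫ + ‖y‖ ^ 2 := norm_sub_sq_real x y
    have hsq : (c * (‖x‖ + ‖y‖)) ^ 2 ≤ ‖x - y‖ ^ 2 := by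
      rw [hexp, mul_pow, hc2]
      nlinarith [sq_nonneg (‖x‖ - ‖y‖), sq_nonneg (‖x‖ + ‖y‖),
        mul_nonneg (norm_nonneg x) (norm_nonneg y)]
    exact le_of_sq_le_sq' (norm_nonneg _) hsq
      (mul_nonneg hcpos.le (by positivity))
  refine ⟨c, hcpos, c * κ, mul_pos hcpos hκpos, ?_⟩
  intro x y ξ hx0 hy0 hξ0 hx hy
  refine ⟨Hsep x y ξ hξ0 hx hy, ?_⟩
  intro τ hτ
  have hξ' : (0:ℝ) < ‖ξ‖ := norm_pos_iff.2 hξ0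
  obtain ⟨z, hz_def⟩ : ∃ z : EuclideanSpace ℝ (Fin d), z = y + (2 * τ) • ξ := ⟨_, rfl⟩
  have hxz : x - (2 * τ) • ξ - y = x - z := by rw [hz_def]; abel
  have hzy : z - y = (2 * τ) • ξ := by rw [hz_def]; abel
  have hzyn : ‖z - y‖ = 2 * τ * ‖ξ‖ := by
    rw [hzy, norm_smul, Real.norm_eq_abs, abs_of_nonneg (by linarith)]
  have habs : |‖z‖ - ‖y‖| ≤ 2 * τ * ‖ξ‖ := by
    rw [← hzyn]
    exact abs_norm_sub_norm_le z y
  have hzin : ⟪z, ξ⟫ = ⟪y, ξ⟫ + 2 * τ * ‖ξ‖ ^ 2 := by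
    rw [hz_def, inner_add_left, real_inner_smul_left, real_inner_self_eq_norm_sq]
  have hD1 := (abs_le.1 habs).1
  have hD2 := (abs_le.1 habs).2
  have hσ3D : σ₃ * (‖z‖ - ‖y‖) ≤ 2 * τ * ‖ξ‖ := by
    nlinarith [mul_nonneg (by linarith [hσ₃.2] : (0:ℝ) ≤ 1 - σ₃)
        (by linarith : (0:ℝ) ≤ 2 * τ * ‖ξ‖ + (‖z‖ - ‖y‖)),
      mul_nonneg (by linarith [hσ₃.1] : (0:ℝ) ≤ 1 + σ₃)
        (by linarith : (0:ℝ) ≤ 2 * τ * ‖ξ‖ - (‖z‖ - ‖y‖))]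
  have hzcone : ⟪z, ξ⟫ > σ₃ * (‖z‖ * ‖ξ‖) := by
    rw [hzin]
    have h1 : σ₃ * (‖z‖ * ‖ξ‖) = σ₃ * (‖y‖ * ‖ξ‖) + σ₃ * (‖z‖ - ‖y‖) * ‖ξ‖ := by ring
    have h2 : σ₃ * (‖z‖ - ‖y‖) * ‖ξ‖ ≤ 2 * τ * ‖ξ‖ * ‖ξ‖ :=
      mul_le_mul_of_nonneg_right hσ3D hξ'.le
    nlinarith
  -- lower bound on ‖z‖
  have hzsq : ‖z‖ ^ 2 = ‖y‖ ^ 2 + 4 * τ * ⟪y, ξ⟫ + 4 * τ ^ 2 * ‖ξ‖ ^ 2 := by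
    rw [hz_def, norm_add_sq_real, real_inner_smul_right, norm_smul, Real.norm_eq_abs,
        abs_of_nonneg (by linarith : (0:ℝ) ≤ 2 * τ)]
    ring
  have hzlow : κ * (‖y‖ + τ * ‖ξ‖) ≤ ‖z‖ := by
    have hsq : (κ * (‖y‖ + τ * ‖ξ‖)) ^ 2 ≤ ‖z‖ ^ 2 := by
      rw [mul_pow, hκ2, hzsq]
      have hyξ : σ₃ * (‖y‖ * ‖ξ‖) ≤ ⟪y, ξ⟫ := hy.le
      have hτy : 0 ≤ τ * ⟪y, ξ⟫ - τ * (σ₃ * (‖y‖ * ‖ξ‖)) := by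
        have := mul_le_mul_of_nonneg_left hyξ hτ
        linarith
      nlinarith [sq_nonneg (‖y‖ - 2 * (τ * ‖ξ‖)), sq_nonneg (‖y‖ - τ * ‖ξ‖),
        mul_nonneg (norm_nonneg y) (mul_nonneg hτ hξ'.le),
        mul_nonneg hm0 (sq_nonneg (‖y‖ - 2 * (τ * ‖ξ‖))),
        mul_nonneg (mul_nonneg (by linarith [hmσ.2] : (0:ℝ) ≤ σ₃ + m) (norm_nonneg y))
          (mul_nonneg hτ hξ'.le)]
    exact le_of_sq_le_sq' (norm_nonneg _) hsq
      (mul_nonneg hκpos.le (by positivity))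
  have hsep := Hsep x z ξ hξ0 hx hzcone
  rw [hxz]
  calc c * κ * (‖x‖ + ‖y‖ + τ * ‖ξ‖)
      ≤ c * (‖x‖ + κ * (‖y‖ + τ * ‖ξ‖)) := by
        nlinarith [mul_nonneg hcpos.le (mul_nonneg (by linarith : (0:ℝ) ≤ 1 - κ) (norm_nonneg x))]
    _ ≤ c * (‖x‖ + ‖z‖) := by nlinarith
    _ ≤ ‖x - z‖ := hsep
end
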